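/- arXiv:2403.06146 — 7 statements merged into one kernel-verified Lean document; each statement's English description precedes it below -/
import Mathlib

section
/- Let n ≥ 2, θ = {(l_h, r_h)}_{h=1}^n ∈ PP(2n), k ∈ {1,…,n}, and θ_k := {(l_h, r_h)}_{1 ≤ h ≠ k ≤ n} the pair partition of {1,…,2n} \ {l_k, r_k} obtained by removing the k-th pair. If r_k = l_k + 1 then c(θ) = c(θ_k), and if r_k = l_k + 2 then c(θ) = c(θ_k) + 1. -/
/-- `θ` is a pair partition of the finite set `V`. -/
def IsPP {α : Type*} [LinearOrder α] (V : Finset α) (θ : Finset (α × α)) : Prop :=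
  (∀ p ∈ θ, p.1 < p.2) ∧
    θ.image Prod.fst ∪ θ.image Prod.snd = V ∧ V.card = 2 * θ.card

/-- The restricted crossing number of a pair partition. -/
def crossNum {α : Type*} [LinearOrder α] (θ : Finset (α × α)) : ℕ :=
  ∑ p ∈ θ, (θ.filter fun q => p.1 < q.1 ∧ q.1 < p.2 ∧ p.2 < q.2).card

private lemma crossNum_split {θ : Finset (ℕ × ℕ)} {p : ℕ × ℕ} (hp : p ∈ θ) :
    crossNum θ = crossNum (θ.erase p)
      + (θ.filter fun q => p.1 < q.1 ∧ q.1 < p.2 ∧ p.2 < q.2).card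
      + (θ.filter fun a => a.1 < p.1 ∧ p.1 < a.2 ∧ a.2 < p.2).card := by
  unfold crossNum
  rw [← Finset.sum_erase_add θ _ hp]
  have key : ∀ a ∈ θ.erase p,
      (θ.filter fun q => a.1 < q.1 ∧ q.1 < a.2 ∧ a.2 < q.2).card
        = ((θ.erase p).filter fun q => a.1 < q.1 ∧ q.1 < a.2 ∧ a.2 < q.2).card
          + (if a.1 < p.1 ∧ p.1 < a.2 ∧ a.2 < p.2 then 1 else 0) := by
    intro a _
    conv_lhs => rw [← Finset.insert_erase hp, Finset.filter_insert]
    split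
    · rw [Finset.card_insert_of_notMem (by simp)]
    · simp
  rw [Finset.sum_congr rfl key, Finset.sum_add_distrib, ← Finset.card_filter]
  have h1 : ((θ.erase p).filter fun a => a.1 < p.1 ∧ p.1 < a.2 ∧ a.2 < p.2)
      = (θ.filter fun a => a.1 < p.1 ∧ p.1 < a.2 ∧ a.2 < p.2) := by
    rw [Finset.filter_erase, Finset.erase_eq_of_notMem (by simp)]
  rw [h1]; ring

/-- Let `n ≥ 2`, `θ ∈ PP(2n)`, and `p = (l_k, r_k)` a pair of `θ`, with `θ_k` the pair
partition obtained by removing it.  If `r_k = l_k + 1` then `c(θ) = c(θ_k)`, and if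
`r_k = l_k + 2` then `c(θ) = c(θ_k) + 1`. -/
theorem stmt7 (n : ℕ) (hn : 2 ≤ n) (θ : Finset (ℕ × ℕ))
    (hθ : IsPP (Finset.Icc 1 (2 * n)) θ) (p : ℕ × ℕ) (hp : p ∈ θ) :
    (p.2 = p.1 + 1 → crossNum θ = crossNum (θ.erase p)) ∧
      (p.2 = p.1 + 2 → crossNum θ = crossNum (θ.erase p) + 1) := by
  obtain ⟨hlt, hunion, hcard⟩ := hθ
  -- injectivity / disjointness of endpoints
  have hA : (θ.image Prod.fst).card ≤ θ.card := Finset.card_image_le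
  have hB : (θ.image Prod.snd).card ≤ θ.card := Finset.card_image_le
  have hiu := Finset.card_union_add_card_inter (θ.image Prod.fst) (θ.image Prod.snd)
  rw [hunion] at hiu
  have h2n : (Finset.Icc 1 (2 * n)).card = 2 * n := by simp
  rw [h2n] at hiu hcard
  have hAc : (θ.image Prod.fst).card = θ.card := by omega
  have hBc : (θ.image Prod.snd).card = θ.card := by omega
  have hdisj : (θ.image Prod.fst ∩ θ.image Prod.snd) = ∅ := by
    have : (θ.image Prod.fst ∩ θ.image Prod.snd).card = 0 := by omega
    exact Finset.card_eq_zero.mp this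
  have hfst : Set.InjOn (Prod.fst : ℕ × ℕ → ℕ) (θ : Set (ℕ × ℕ)) := Finset.card_image_iff.mp hAc
  have hsnd : Set.InjOn (Prod.snd : ℕ × ℕ → ℕ) (θ : Set (ℕ × ℕ)) := Finset.card_image_iff.mp hBc
  -- uniqueness of the pair covering a point
  have huniq : ∀ m : ℕ, ∀ q ∈ θ, ∀ q' ∈ θ, (q.1 = m ∨ q.2 = m) →
      (q'.1 = m ∨ q'.2 = m) → q = q' := by
    intro m q hq q' hq' h h'
    have hnot : ¬ (m ∈ θ.image Prod.fst ∧ m ∈ θ.image Prod.snd) := by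
      intro ⟨ha, hb⟩
      have : m ∈ θ.image Prod.fst ∩ θ.image Prod.snd := Finset.mem_inter.mpr ⟨ha, hb⟩
      simp [hdisj] at this
    rcases h with h | h <;> rcases h' with h' | h'
    · exact hfst hq hq' (h.trans h'.symm)
    · exact absurd ⟨Finset.mem_image.mpr ⟨q, hq, h⟩, Finset.mem_image.mpr ⟨q', hq', h'⟩⟩ hnot
    · exact absurd ⟨Finset.mem_image.mpr ⟨q', hq', h'⟩, Finset.mem_image.mpr ⟨q, hq, h⟩⟩ hnot
    · exact hsnd hq hq' (h.trans h'.symm)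
  -- existence
  have hexist : ∀ m : ℕ, m ∈ Finset.Icc 1 (2 * n) → ∃ q ∈ θ, q.1 = m ∨ q.2 = m := by
    intro m hm
    rw [← hunion, Finset.mem_union] at hm
    rcases hm with hm | hm <;> obtain ⟨q, hq, hq2⟩ := Finset.mem_image.mp hm
    · exact ⟨q, hq, Or.inl hq2⟩
    · exact ⟨q, hq, Or.inr hq2⟩
  have hsplit := crossNum_split hp
  constructor
  · intro h1
    have hAe : (θ.filter fun q => p.1 < q.1 ∧ q.1 < p.2 ∧ p.2 < q.2) = ∅ := by
      rw [Finset.filter_eq_empty_iff]; intro q _; omega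
    have hBe : (θ.filter fun a => a.1 < p.1 ∧ p.1 < a.2 ∧ a.2 < p.2) = ∅ := by
      rw [Finset.filter_eq_empty_iff]; intro q _; omega
    rw [hAe, hBe] at hsplit; simpa using hsplit
  · intro h2
    -- p.2 = p.1 + 2 ; the midpoint
    have hp2mem : p.2 ∈ Finset.Icc 1 (2 * n) := by
      rw [← hunion]
      exact Finset.mem_union_right _ (Finset.mem_image_of_mem _ hp)
    have hp1mem : p.1 ∈ Finset.Icc 1 (2 * n) := by
      rw [← hunion]
      exact Finset.mem_union_left _ (Finset.mem_image_of_mem _ hp)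
    have hmmem : p.1 + 1 ∈ Finset.Icc 1 (2 * n) := by
      simp only [Finset.mem_Icc] at *; omega
    obtain ⟨q, hq, hqm⟩ := hexist _ hmmem
    have hqp : q ≠ p := by
      intro h
      rw [h] at hqm
      rcases hqm with h' | h' <;> omega
    have hqlt := hlt q hq
    rcases hqm with hqm | hqm
    · -- q.1 = p.1+1 : A = {q}, B = ∅
      have hq2 : p.2 < q.2 := by
        rcases Nat.lt_or_ge p.2 q.2 with h | h
        · exact h
        · exfalso
          have : q.2 = p.2 := by omega
          exact hqp (huniq p.2 q hq p hp (Or.inr this) (Or.inr rfl))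
      have hAq : (θ.filter fun q => p.1 < q.1 ∧ q.1 < p.2 ∧ p.2 < q.2) = {q} := by
        apply Finset.eq_singleton_iff_unique_mem.mpr
        constructor
        · exact Finset.mem_filter.mpr ⟨hq, by omega⟩
        · intro x hx
          rw [Finset.mem_filter] at hx
          exact huniq (p.1 + 1) x hx.1 q hq (Or.inl (by omega)) (Or.inl hqm)
      have hBe : (θ.filter fun a => a.1 < p.1 ∧ p.1 < a.2 ∧ a.2 < p.2) = ∅ := by
        rw [Finset.filter_eq_empty_iff]
        intro x hx hc
        have hx2 : x.2 = p.1 + 1 := by omega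
        have hxq := huniq (p.1 + 1) x hx q hq (Or.inr hx2) (Or.inl hqm)
        subst hxq
        omega
      rw [hAq, hBe] at hsplit; simpa using hsplit
    · -- q.2 = p.1+1 : B = {q}, A = ∅
      have hq1 : q.1 < p.1 := by
        rcases Nat.lt_or_ge q.1 p.1 with h | h
        · exact h
        · exfalso
          have : q.1 = p.1 := by omega
          exact hqp (huniq p.1 q hq p hp (Or.inl this) (Or.inl rfl))
      have hBq : (θ.filter fun a => a.1 < p.1 ∧ p.1 < a.2 ∧ a.2 < p.2) = {q} := by
        apply Finset.eq_singleton_iff_unique_mem.mpr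
        constructor
        · exact Finset.mem_filter.mpr ⟨hq, by omega⟩
        · intro x hx
          rw [Finset.mem_filter] at hx
          have hx2 : x.2 = p.1 + 1 := by omega
          exact huniq (p.1 + 1) x hx.1 q hq (Or.inr hx2) (Or.inr hqm)
      have hAe : (θ.filter fun q => p.1 < q.1 ∧ q.1 < p.2 ∧ p.2 < q.2) = ∅ := by
        rw [Finset.filter_eq_empty_iff]
        intro x hx hc
        have hx1 : x.1 = p.1 + 1 := by omega
        have hxq := huniq (p.1 + 1) x hx q hq (Or.inl hx1) (Or.inr hqm)
        subst hxq
        omega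
      rw [hAe, hBq] at hsplit; simpa using hsplit
end

section
/- Let n ≥ 2, θ = {(l_h, r_h)}_{h=1}^n ∈ PP(2n), and θ_n := {(l_h, r_h)}_{h=1}^{n-1} the pair partition of {1,…,2n} \ {l_n, r_n} obtained by removing the last pair. Then c(θ) = c(θ_n) + r_n − l_n − 1. -/
/-- Let `n ≥ 2`, `θ ∈ PP(2n)` and let `p = (l_n, r_n)` be the last pair of `θ` (the one
with the greatest left entry).  Then `c(θ) = c(θ_n) + r_n − l_n − 1`, where `θ_n` is
obtained from `θ` by removing `p`. -/
theorem stmt8 (n : ℕ) (hn : 2 ≤ n) (θ : Finset (ℕ × ℕ))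
    (hθ : IsPP (Finset.Icc 1 (2 * n)) θ) (p : ℕ × ℕ) (hp : p ∈ θ)
    (hlast : ∀ q ∈ θ, q.1 ≤ p.1) :
    crossNum θ = crossNum (θ.erase p) + (p.2 - p.1 - 1) := by
  obtain ⟨hlt, hV, hcard⟩ := hθ
  have hAle : (θ.image Prod.fst).card ≤ θ.card := Finset.card_image_le
  have hBle : (θ.image Prod.snd).card ≤ θ.card := Finset.card_image_le
  have hUle := Finset.card_union_le (θ.image Prod.fst) (θ.image Prod.snd)
  have hU : (θ.image Prod.fst ∪ θ.image Prod.snd).card = 2 * θ.card := by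
    rw [hV]; exact hcard
  have hAcard : (θ.image Prod.fst).card = θ.card := by omega
  have hBcard : (θ.image Prod.snd).card = θ.card := by omega
  have hfst : Set.InjOn Prod.fst (θ : Set (ℕ × ℕ)) := Finset.card_image_iff.mp hAcard
  have hsnd : Set.InjOn Prod.snd (θ : Set (ℕ × ℕ)) := Finset.card_image_iff.mp hBcard
  have hq1 : ∀ q ∈ θ.erase p, q.1 < p.1 := by
    intro q hq
    have hqθ := Finset.mem_of_mem_erase hq
    have hne := Finset.ne_of_mem_erase hq
    exact lt_of_le_of_ne (hlast q hqθ)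
      (fun h => hne (hfst (Finset.mem_coe.mpr hqθ) (Finset.mem_coe.mpr hp) h))
  have hp1 : p.1 ∈ Finset.Icc 1 (2 * n) := by
    rw [← hV]; exact Finset.mem_union_left _ (Finset.mem_image_of_mem _ hp)
  have hp2 : p.2 ∈ Finset.Icc 1 (2 * n) := by
    rw [← hV]; exact Finset.mem_union_right _ (Finset.mem_image_of_mem _ hp)
  have hkey : ((θ.erase p).filter fun q => q.1 < p.1 ∧ p.1 < q.2 ∧ q.2 < p.2).card
      = p.2 - p.1 - 1 := by
    rw [← Nat.card_Ioo]
    apply Finset.card_bij (fun q _ => q.2)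
    · intro q hq
      simp only [Finset.mem_filter] at hq
      exact Finset.mem_Ioo.mpr ⟨hq.2.2.1, hq.2.2.2⟩
    · intro a ha b hb hab
      simp only [Finset.mem_filter] at ha hb
      exact hsnd (Finset.mem_coe.mpr (Finset.mem_of_mem_erase ha.1))
        (Finset.mem_coe.mpr (Finset.mem_of_mem_erase hb.1)) hab
    · intro k hk
      rw [Finset.mem_Ioo] at hk
      have hkV : k ∈ Finset.Icc 1 (2 * n) := by
        rw [Finset.mem_Icc] at hp1 hp2 ⊢; omega
      rw [← hV, Finset.mem_union] at hkV
      rcases hkV with h | h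
      · obtain ⟨q, hq, hq1'⟩ := Finset.mem_image.mp h
        have := hlast q hq
        omega
      · obtain ⟨q, hq, hq2⟩ := Finset.mem_image.mp h
        have hne : q ≠ p := by
          intro h; subst h; omega
        have hqe : q ∈ θ.erase p := Finset.mem_erase.mpr ⟨hne, hq⟩
        exact ⟨q, Finset.mem_filter.mpr ⟨hqe, hq1 q hqe, by omega, by omega⟩, hq2⟩
  have hsplit : ∀ q : ℕ × ℕ,
      (θ.filter fun r => q.1 < r.1 ∧ r.1 < q.2 ∧ q.2 < r.2).card
        = ((θ.erase p).filter fun r => q.1 < r.1 ∧ r.1 < q.2 ∧ q.2 < r.2).card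
          + if q.1 < p.1 ∧ p.1 < q.2 ∧ q.2 < p.2 then 1 else 0 := by
    intro q
    conv_lhs => rw [← Finset.insert_erase hp]
    rw [Finset.filter_insert]
    split_ifs with h
    · rw [Finset.card_insert_of_notMem
        (fun hc => (Finset.notMem_erase p θ) (Finset.mem_of_mem_filter _ hc))]
    · rw [Nat.add_zero]
  have hp0 : (θ.filter fun r => p.1 < r.1 ∧ r.1 < p.2 ∧ p.2 < r.2).card = 0 := by
    rw [Finset.card_eq_zero, Finset.filter_eq_empty_iff]
    intro q hq h
    exact absurd (hlast q hq) (not_le.mpr h.1)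
  unfold crossNum
  rw [← Finset.add_sum_erase θ _ hp, hp0, Nat.zero_add]
  rw [Finset.sum_congr rfl (fun q _ => hsplit q), Finset.sum_add_distrib,
    ← Finset.card_filter, hkey]
end

section
/- Let n ≥ 1, θ = {(l_h, r_h)}_{h=1}^n ∈ NCPP(2n), and k ∈ {1,…,n}. Then d_θ(l_k, r_k) = |{h : r_h > r_k}| − |{h : l_h > r_k}|. -/
/-- `θ` is non-crossing: for pairs `p, q` with `p.1 < q.1`,
`(l_k < l_h < r_k) ↔ (l_k < r_h < r_k)`. -/
def IsNC {α : Type*} [LinearOrder α] (θ : Finset (α × α)) : Prop :=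
  ∀ p ∈ θ, ∀ q ∈ θ, p.1 < q.1 →
    ((p.1 < q.1 ∧ q.1 < p.2) ↔ (p.1 < q.2 ∧ q.2 < p.2))

/-- The depth of the pair `p` in `θ`: `d_θ(l_k, r_k) = |{h : l_h < l_k < r_k < r_h}|`. -/
def pairDepth {α : Type*} [LinearOrder α] (θ : Finset (α × α)) (p : α × α) : ℕ :=
  (θ.filter fun q => q.1 < p.1 ∧ p.1 < p.2 ∧ p.2 < q.2).card

/-- Let `n ≥ 1`, `θ ∈ NCPP(2n)` and `p = (l_k, r_k)` a pair of `θ`.  Then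
`d_θ(l_k, r_k) = |{h : r_h > r_k}| − |{h : l_h > r_k}|`. -/
theorem stmt9 (n : ℕ) (hn : 1 ≤ n) (θ : Finset (ℕ × ℕ))
    (hθ : IsPP (Finset.Icc 1 (2 * n)) θ) (hnc : IsNC θ)
    (p : ℕ × ℕ) (hp : p ∈ θ) :
    (pairDepth θ p : ℤ) =
      ((θ.filter fun q => p.2 < q.2).card : ℤ) -
        ((θ.filter fun q => p.2 < q.1).card : ℤ) := by
  obtain ⟨hlt, huni, hcard⟩ := hθ
  have h1 : (θ.image Prod.fst).card ≤ θ.card := Finset.card_image_le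
  have h2 : (θ.image Prod.snd).card ≤ θ.card := Finset.card_image_le
  have h3 : (θ.image Prod.fst ∪ θ.image Prod.snd).card = 2 * θ.card := by
    rw [huni]; omega
  have h4 := Finset.card_union_add_card_inter (θ.image Prod.fst) (θ.image Prod.snd)
  have hfst : (θ.image Prod.fst).card = θ.card := by omega
  have hint : ((θ.image Prod.fst) ∩ (θ.image Prod.snd)).card = 0 := by omega
  have hinj : Set.InjOn Prod.fst (θ : Set (ℕ × ℕ)) := Finset.card_image_iff.mp hfst
  have hdisj : Disjoint (θ.image Prod.fst) (θ.image Prod.snd) := by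
    exact Finset.disjoint_iff_inter_eq_empty.mpr (Finset.card_eq_zero.mp hint)
  have key : ∀ q ∈ θ, (p.2 < q.2 ↔ ((q.1 < p.1 ∧ p.1 < p.2 ∧ p.2 < q.2) ∨ p.2 < q.1)) := by
    intro q hq
    constructor
    · intro h
      rcases lt_trichotomy q.1 p.1 with h1 | h1 | h1
      · exact Or.inl ⟨h1, hlt p hp, h⟩
      · exact absurd (hinj hq hp h1 ▸ h) (lt_irrefl _)
      · rcases lt_trichotomy q.1 p.2 with h2 | h2 | h2
        · have := (hnc p hp q hq h1).mp ⟨h1, h2⟩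
          omega
        · exact absurd (h2 ▸ Finset.mem_image_of_mem Prod.snd hp)
            (Finset.disjoint_left.mp hdisj (Finset.mem_image_of_mem Prod.fst hq))
        · exact Or.inr h2
    · rintro (⟨_, _, h⟩ | h)
      · exact h
      · exact h.trans (hlt q hq)
  have heq : θ.filter (fun q => p.2 < q.2) =
      θ.filter (fun q => (q.1 < p.1 ∧ p.1 < p.2 ∧ p.2 < q.2) ∨ p.2 < q.1) :=
    Finset.filter_congr (by intro q hq; simpa using key q hq)
  have hdisj2 : Disjoint (θ.filter fun q => q.1 < p.1 ∧ p.1 < p.2 ∧ p.2 < q.2)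
      (θ.filter fun q => p.2 < q.1) := by
    rw [Finset.disjoint_left]
    intro q hq1 hq2
    simp only [Finset.mem_filter] at hq1 hq2
    omega
  have : (θ.filter fun q => p.2 < q.2).card =
      (θ.filter fun q => q.1 < p.1 ∧ p.1 < p.2 ∧ p.2 < q.2).card +
      (θ.filter fun q => p.2 < q.1).card := by
    rw [heq, Finset.filter_or, Finset.card_union_of_disjoint hdisj2]
  rw [pairDepth]
  omega
end

section
/- Let n ≥ 2, θ = {(l_h, r_h)}_{h=1}^n ∈ NCPP(2n), k ∈ {1,…,n}, and θ_k := {(l_h, r_h)}_{1 ≤ h ≠ k ≤ n} the non-crossing pair partition of {1,…,2n} \ {l_k, r_k} obtained by removing the k-th pair. Then for any p ∈ {1,…,n} with p ≠ k, the equality d_{θ_k}(l_p, r_p) = d_θ(l_p, r_p) holds if any one of the following conditions is satisfied: (i) r_k = l_k + 1; (ii) there exists s ∈ {0,1,…,n−1} with d_θ(l_k, r_k) ≥ s and d_θ(l_p, r_p) ≤ s; (iii) there exists s ∈ {1,…,n−1} with d_θ(l_k, r_k) ≥ s and d_{θ_k}(l_p, r_p) < s. -/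
/-- Let `n ≥ 2`, `θ ∈ NCPP(2n)`, `p = (l_k, r_k)` a pair of `θ`, and `θ_k := θ.erase p`.
For any other pair `q = (l_p, r_p)` of `θ`, the equality `d_{θ_k}(q) = d_θ(q)` holds if:
(i) `r_k = l_k + 1`; or (ii) there is `s ∈ {0,…,n−1}` with `d_θ(p) ≥ s` and
`d_θ(q) ≤ s`; or (iii) there is `s ∈ {1,…,n−1}` with `d_θ(p) ≥ s` and
`d_{θ_k}(q) < s`. -/
theorem stmt14 (n : ℕ) (hn : 2 ≤ n) (θ : Finset (ℕ × ℕ))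
    (hθ : IsPP (Finset.Icc 1 (2 * n)) θ) (hnc : IsNC θ)
    (p : ℕ × ℕ) (hp : p ∈ θ) (q : ℕ × ℕ) (hq : q ∈ θ) (hqp : q ≠ p)
    (hcond : p.2 = p.1 + 1 ∨
      (∃ s : ℕ, s ≤ n - 1 ∧ s ≤ pairDepth θ p ∧ pairDepth θ q ≤ s) ∨
      (∃ s : ℕ, 1 ≤ s ∧ s ≤ n - 1 ∧ s ≤ pairDepth θ p ∧
        pairDepth (θ.erase p) q < s)) :
    pairDepth (θ.erase p) q = pairDepth θ q := by
  obtain ⟨hlt, -, -⟩ := hθ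
  have hq12 : q.1 < q.2 := hlt q hq
  have key : ¬ (p.1 < q.1 ∧ q.1 < q.2 ∧ q.2 < p.2) := by
    rintro ⟨h1, h2, h3⟩
    have hsub : ∀ r ∈ θ.filter fun r => r.1 < p.1 ∧ p.1 < p.2 ∧ p.2 < r.2,
        r ∈ θ ∧ (r.1 < q.1 ∧ q.1 < q.2 ∧ q.2 < r.2) ∧ r ≠ p := by
      intro r hr
      simp only [Finset.mem_filter] at hr
      obtain ⟨hrθ, hr1, -, hr2⟩ := hr
      exact ⟨hrθ, ⟨lt_trans hr1 h1, h2, lt_trans h3 hr2⟩,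
        fun h => by rw [h] at hr1; exact lt_irrefl _ hr1⟩
    rcases hcond with h | ⟨s, hs1, hs2, hs3⟩ | ⟨s, hs0, hs1, hs2, hs3⟩
    · omega
    · have hle : pairDepth θ p + 1 ≤ pairDepth θ q := by
        unfold pairDepth
        have hsub2 : insert p (θ.filter fun r => r.1 < p.1 ∧ p.1 < p.2 ∧ p.2 < r.2)
            ⊆ θ.filter fun r => r.1 < q.1 ∧ q.1 < q.2 ∧ q.2 < r.2 := by
          intro r hr
          rcases Finset.mem_insert.mp hr with rfl | hr
          · exact Finset.mem_filter.mpr ⟨hp, h1, h2, h3⟩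
          · obtain ⟨hrθ, hcov, -⟩ := hsub r hr
            exact Finset.mem_filter.mpr ⟨hrθ, hcov⟩
        have hnm : p ∉ θ.filter fun r => r.1 < p.1 ∧ p.1 < p.2 ∧ p.2 < r.2 := by
          simp only [Finset.mem_filter]
          rintro ⟨-, h, -⟩; exact lt_irrefl _ h
        calc _ = (insert p (θ.filter fun r => r.1 < p.1 ∧ p.1 < p.2 ∧ p.2 < r.2)).card := by
              rw [Finset.card_insert_of_notMem hnm]
          _ ≤ _ := Finset.card_le_card hsub2
      omega
    · have hle : pairDepth θ p ≤ pairDepth (θ.erase p) q := by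
        unfold pairDepth
        apply Finset.card_le_card
        intro r hr
        obtain ⟨hrθ, hcov, hrp⟩ := hsub r hr
        exact Finset.mem_filter.mpr ⟨Finset.mem_erase.mpr ⟨hrp, hrθ⟩, hcov⟩
      omega
  unfold pairDepth
  rw [Finset.filter_erase, Finset.erase_eq_of_notMem]
  simp only [Finset.mem_filter]
  rintro ⟨-, h⟩
  exact key h
end

section
/- Let n ≥ 2, θ = {(l_h, r_h)}_{h=1}^n ∈ NCPP(2n), k ∈ {1,…,n}, and θ_k := {(l_h, r_h)}_{1 ≤ h ≠ k ≤ n} the non-crossing pair partition of {1,…,2n} \ {l_k, r_k} obtained by removing the k-th pair. Then for any p ∈ {1,…,n} with p ≠ k: (a) if d_θ(l_k, r_k) ≥ 1, then d_{θ_k}(l_p, r_p) = 0 if and only if d_θ(l_p, r_p) = 0; (b) if d_θ(l_k, r_k) ≥ 2, then d_{θ_k}(l_p, r_p) = 1 if and only if d_θ(l_p, r_p) = 1. -/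
/-- Let `n ≥ 2`, `θ ∈ NCPP(2n)`, `p` a pair of `θ` and `θ_k := θ.erase p`.  For any other
pair `q` of `θ`: (a) if `d_θ(p) ≥ 1` then `d_{θ_k}(q) = 0 ↔ d_θ(q) = 0`; (b) if
`d_θ(p) ≥ 2` then `d_{θ_k}(q) = 1 ↔ d_θ(q) = 1`. -/
theorem stmt15 (n : ℕ) (hn : 2 ≤ n) (θ : Finset (ℕ × ℕ))
    (hθ : IsPP (Finset.Icc 1 (2 * n)) θ) (hnc : IsNC θ)
    (p : ℕ × ℕ) (hp : p ∈ θ) (q : ℕ × ℕ) (hq : q ∈ θ) (hqp : q ≠ p) :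
    (1 ≤ pairDepth θ p →
      (pairDepth (θ.erase p) q = 0 ↔ pairDepth θ q = 0)) ∧
    (2 ≤ pairDepth θ p →
      (pairDepth (θ.erase p) q = 1 ↔ pairDepth θ q = 1)) := by
  classical
  unfold pairDepth
  by_cases hcov : p.1 < q.1 ∧ q.1 < q.2 ∧ q.2 < p.2
  · have herase : (θ.erase p).filter (fun r => r.1 < q.1 ∧ q.1 < q.2 ∧ q.2 < r.2)
        = (θ.filter (fun r => r.1 < q.1 ∧ q.1 < q.2 ∧ q.2 < r.2)).erase p := by
      ext r
      simp only [Finset.mem_filter, Finset.mem_erase]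
      tauto
    have hsub : θ.filter (fun r => r.1 < p.1 ∧ p.1 < p.2 ∧ p.2 < r.2)
        ⊆ (θ.filter (fun r => r.1 < q.1 ∧ q.1 < q.2 ∧ q.2 < r.2)).erase p := by
      intro r hr
      simp only [Finset.mem_filter] at hr
      refine Finset.mem_erase.mpr ⟨?_, Finset.mem_filter.mpr
        ⟨hr.1, hr.2.1.trans hcov.1, hcov.2.1, hcov.2.2.trans hr.2.2.2⟩⟩
      rintro rfl
      exact lt_irrefl _ hr.2.1
    have hle := Finset.card_le_card hsub
    have hmem : p ∈ θ.filter (fun r => r.1 < q.1 ∧ q.1 < q.2 ∧ q.2 < r.2) :=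
      Finset.mem_filter.mpr ⟨hp, hcov⟩
    have hcard := Finset.card_erase_add_one hmem
    rw [herase]
    omega
  · have heq : (θ.erase p).filter (fun r => r.1 < q.1 ∧ q.1 < q.2 ∧ q.2 < r.2)
        = θ.filter (fun r => r.1 < q.1 ∧ q.1 < q.2 ∧ q.2 < r.2) := by
      ext r
      simp only [Finset.mem_filter, Finset.mem_erase]
      constructor
      · tauto
      · rintro ⟨hrθ, hrc⟩
        refine ⟨⟨?_, hrθ⟩, hrc⟩
        rintro rfl
        exact hcov hrc
    rw [heq]
    exact ⟨fun _ => Iff.rfl, fun _ => Iff.rfl⟩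
end

section
/- Let n ≥ 1, let V = {v_1 < … < v_{2n+2}} be a finite linearly ordered set, let ε ∈ {-1,1}^V_+, and set m := max{h : ε(v_h) = −1}. For each k ∈ {1,…,2n+2−m}, let V_k := V \ {v_m, v_{m+k}} and ε_k := the restriction of ε to V_k. Then: (a) ε_k ∈ {-1,1}^{V_k}_+ for every k ∈ {1,…,2n+2−m}; (b) PP(V, ε) = ⋃_{k=1}^{2n+2−m} ({(v_m, v_{m+k})} ⊎ PP(V_k, ε_k)); (c) the sets {(v_m, v_{m+k})} ⊎ PP(V_k, ε_k), for k ∈ {1,…,2n+2−m}, are pairwise disjoint. -/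
/-- `PP(V, ε)`: pair partitions of `V` with `ε = -1` on left entries and `ε = 1` on
right entries. -/
def IsPPe {α : Type*} [LinearOrder α] (V : Finset α) (ε : α → ℤ)
    (θ : Finset (α × α)) : Prop :=
  IsPP V θ ∧ ∀ p ∈ θ, ε p.1 = -1 ∧ ε p.2 = 1

/-- The set `{(u, w)} ⊎ PP(V \ {u, w}, ε)` of gluings of the single pair `(u, w)` with
pair partitions of `V \ {u, w}` compatible with `ε`. -/
def glueSet {α : Type*} [LinearOrder α] (V : Finset α) (ε : α → ℤ) (u w : α) :
    Set (Finset (α × α)) :=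
  {θ | ∃ θ' : Finset (α × α), IsPPe (V \ {u, w}) ε θ' ∧ θ = θ' ∪ {(u, w)}}

lemma isPP_aux {α : Type*} [LinearOrder α] {V : Finset α} {θ : Finset (α × α)}
    (h : IsPP V θ) :
    (θ.image Prod.fst).card = θ.card ∧ (θ.image Prod.snd).card = θ.card ∧
      Disjoint (θ.image Prod.fst) (θ.image Prod.snd) := by
  obtain ⟨-, hUn, hcard⟩ := h
  have h1 := Finset.card_image_le (s := θ) (f := Prod.fst)
  have h2 := Finset.card_image_le (s := θ) (f := Prod.snd)
  have h3 := Finset.card_union_add_card_inter (θ.image Prod.fst) (θ.image Prod.snd)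
  rw [hUn] at h3
  have h4 : ((θ.image Prod.fst) ∩ (θ.image Prod.snd)).card = 0 := by omega
  refine ⟨by omega, by omega, ?_⟩
  rw [Finset.disjoint_iff_inter_eq_empty]
  exact Finset.card_eq_zero.mp h4

/-- Let `V = {v_1 < … < v_{2n+2}}`, `ε ∈ {-1,1}^V_+` and `u := v_m` the greatest element
of `V` where `ε = -1`.  Then: (a) for every `w ∈ V` with `u < w`, the restriction of `ε`
to `V \ {u, w}` is again in `{-1,1}^{V \ {u,w}}_+`; (b) `PP(V, ε)` is the union over
such `w` of the sets `{(u, w)} ⊎ PP(V \ {u, w}, ε)`; and (c) these sets are pairwise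
disjoint. -/
theorem stmt16 {α : Type*} [LinearOrder α] (n : ℕ) (hn : 1 ≤ n)
    (V : Finset α) (hV : V.card = 2 * n + 2) (ε : α → ℤ)
    (hval : ∀ v ∈ V, ε v = 1 ∨ ε v = -1)
    (hsum : ∑ v ∈ V, ε v = 0)
    (htail : ∀ u ∈ V, 0 ≤ ∑ v ∈ V.filter (fun v => u ≤ v), ε v)
    (u : α) (hu : u ∈ V) (huneg : ε u = -1)
    (humax : ∀ v ∈ V, ε v = -1 → v ≤ u) :
    (∀ w ∈ V, u < w →
      (∑ v ∈ V \ {u, w}, ε v = 0 ∧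
        ∀ x ∈ V \ {u, w},
          0 ≤ ∑ v ∈ (V \ {u, w}).filter (fun v => x ≤ v), ε v)) ∧
    ({θ : Finset (α × α) | IsPPe V ε θ} =
      ⋃ w ∈ V.filter (fun w => u < w), glueSet V ε u w) ∧
    (∀ w ∈ V, ∀ w' ∈ V, u < w → u < w' → w ≠ w' →
      Disjoint (glueSet V ε u w) (glueSet V ε u w')) := by
  have hpos : ∀ w ∈ V, u < w → ε w = 1 := by
    intro w hw hlt
    rcases hval w hw with h | h
    · exact h
    · exact absurd (humax w hw h) (not_le.mpr hlt)
  refine ⟨?_, ?_, ?_⟩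
  · -- part (a)
    intro w hw hlt
    have hne : u ≠ w := hlt.ne
    have hsub : ({u, w} : Finset α) ⊆ V := by
      intro x hx
      simp only [Finset.mem_insert, Finset.mem_singleton] at hx
      rcases hx with rfl | rfl <;> assumption
    constructor
    · rw [Finset.sum_sdiff_eq_sub hsub, hsum, Finset.sum_pair hne, huneg,
        hpos w hw hlt]
      ring
    · intro x hx
      simp only [Finset.mem_sdiff, Finset.mem_insert, Finset.mem_singleton] at hx
      obtain ⟨hxV, hxne⟩ := hx
      by_cases hxu : x ≤ u
      · have key : (V \ {u, w}).filter (fun v => x ≤ v)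
            = (V.filter (fun v => x ≤ v)) \ {u, w} := by
          ext y
          simp only [Finset.mem_filter, Finset.mem_sdiff]
          tauto
        rw [key]
        have hsub2 : ({u, w} : Finset α) ⊆ V.filter (fun v => x ≤ v) := by
          intro y hy
          simp only [Finset.mem_insert, Finset.mem_singleton] at hy
          rcases hy with rfl | rfl
          · exact Finset.mem_filter.mpr ⟨hu, hxu⟩
          · exact Finset.mem_filter.mpr ⟨hw, hxu.trans hlt.le⟩
        rw [Finset.sum_sdiff_eq_sub hsub2, Finset.sum_pair hne, huneg,
          hpos w hw hlt]
        have := htail x hxV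
        linarith
      · push_neg at hxu
        apply Finset.sum_nonneg
        intro y hy
        simp only [Finset.mem_filter, Finset.mem_sdiff] at hy
        rw [hpos y hy.1.1 (lt_of_lt_of_le hxu hy.2)]
        norm_num
  · -- part (b)
    ext θ
    simp only [Set.mem_setOf_eq, Set.mem_iUnion, Finset.mem_filter, glueSet,
      Set.mem_setOf_eq, exists_prop]
    constructor
    · rintro ⟨hpp, heps⟩
      obtain ⟨hfstc, hsndc, hdisj⟩ := isPP_aux hpp
      obtain ⟨hord, hUn, hcard⟩ := hpp
      have hfinj : Set.InjOn Prod.fst (θ : Set (α × α)) :=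
        Finset.card_image_iff.mp hfstc
      have hsinj : Set.InjOn Prod.snd (θ : Set (α × α)) :=
        Finset.card_image_iff.mp hsndc
      have huV' : u ∈ θ.image Prod.fst ∪ θ.image Prod.snd := hUn ▸ hu
      have hufst : u ∈ θ.image Prod.fst := by
        rcases Finset.mem_union.mp huV' with h | h
        · exact h
        · exfalso
          obtain ⟨p, hp, hpe⟩ := Finset.mem_image.mp h
          have := (heps p hp).2
          rw [hpe, huneg] at this
          omega
      obtain ⟨p, hp, hpu⟩ := Finset.mem_image.mp hufst
      set w := p.2 with hwdef
      have hpuw : p = (u, w) := by rw [← hpu]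
      have hltw : u < w := hpu ▸ hord p hp
      have hwV : w ∈ V := by
        rw [← hUn]
        exact Finset.mem_union_right _ (Finset.mem_image_of_mem _ hp)
      have hne : u ≠ w := hltw.ne
      have hsub : ({u, w} : Finset α) ⊆ V := by
        intro x hx
        simp only [Finset.mem_insert, Finset.mem_singleton] at hx
        rcases hx with rfl | rfl <;> assumption
      have hmem : (u, w) ∈ θ := hpuw ▸ hp
      have hwsnd : w ∈ θ.image Prod.snd := Finset.mem_image_of_mem _ hp
      have hunB : u ∉ θ.image Prod.snd := Finset.disjoint_left.mp hdisj hufst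
      have hwA : w ∉ θ.image Prod.fst := fun h =>
        (Finset.disjoint_left.mp hdisj h) hwsnd
      refine ⟨w, ⟨hwV, hltw⟩, θ.erase (u, w), ⟨⟨?_, ?_, ?_⟩, ?_⟩, ?_⟩
      · intro q hq
        exact hord q (Finset.mem_of_mem_erase hq)
      · have hA : (θ.erase (u, w)).image Prod.fst = (θ.image Prod.fst).erase u := by
          ext x
          simp only [Finset.mem_image, Finset.mem_erase]
          constructor
          · rintro ⟨q, ⟨hq1, hq2⟩, rfl⟩
            refine ⟨fun hxu => hq1 ?_, q, hq2, rfl⟩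
            exact hfinj hq2 hmem (by simpa using hxu)
          · rintro ⟨hxu, q, hq, rfl⟩
            exact ⟨q, ⟨fun habs => hxu (by rw [habs]), hq⟩, rfl⟩
        have hB : (θ.erase (u, w)).image Prod.snd = (θ.image Prod.snd).erase w := by
          ext x
          simp only [Finset.mem_image, Finset.mem_erase]
          constructor
          · rintro ⟨q, ⟨hq1, hq2⟩, rfl⟩
            refine ⟨fun hxw => hq1 ?_, q, hq2, rfl⟩
            exact hsinj hq2 hmem (by simpa using hxw)
          · rintro ⟨hxw, q, hq, rfl⟩
            exact ⟨q, ⟨fun habs => hxw (by rw [habs]), hq⟩, rfl⟩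
        rw [hA, hB]
        ext x
        simp only [Finset.mem_union, Finset.mem_erase, Finset.mem_sdiff, ← hUn,
          Finset.mem_insert, Finset.mem_singleton]
        constructor
        · rintro (⟨hxu, hx⟩ | ⟨hxw, hx⟩)
          · exact ⟨Or.inl hx, by rintro (rfl | rfl); exact hxu rfl; exact hwA hx⟩
          · exact ⟨Or.inr hx, by rintro (rfl | rfl); exact hunB hx; exact hxw rfl⟩
        · rintro ⟨hx, hnot⟩
          push_neg at hnot
          rcases hx with hx | hx
          · exact Or.inl ⟨hnot.1, hx⟩
          · exact Or.inr ⟨hnot.2, hx⟩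
      · have h1 : (V \ {u, w}).card = V.card - 2 := by
          rw [Finset.card_sdiff_of_subset hsub, Finset.card_pair hne]
        have h2 : (θ.erase (u, w)).card = θ.card - 1 :=
          Finset.card_erase_of_mem hmem
        have h3 : 1 ≤ θ.card := Finset.card_pos.mpr ⟨_, hmem⟩
        omega
      · intro q hq
        exact heps q (Finset.mem_of_mem_erase hq)
      · ext q
        simp only [Finset.mem_union, Finset.mem_erase, Finset.mem_singleton]
        constructor
        · intro hq
          by_cases h : q = (u, w) <;> tauto
        · rintro (⟨-, hq⟩ | rfl)
          · exact hq
          · exact hmem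
    · rintro ⟨w, ⟨hwV, hltw⟩, θ', ⟨⟨hord', hUn', hcard'⟩, heps'⟩, rfl⟩
      have hne : u ≠ w := hltw.ne
      have hsub : ({u, w} : Finset α) ⊆ V := by
        intro x hx
        simp only [Finset.mem_insert, Finset.mem_singleton] at hx
        rcases hx with rfl | rfl <;> assumption
      have hnotin : (u, w) ∉ θ' := by
        intro h
        have : u ∈ V \ {u, w} := by
          rw [← hUn']
          exact Finset.mem_union_left _ (Finset.mem_image_of_mem _ h)
        simp at this
      refine ⟨⟨?_, ?_, ?_⟩, ?_⟩
      · intro q hq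
        rcases Finset.mem_union.mp hq with h | h
        · exact hord' q h
        · rw [Finset.mem_singleton.mp h]
          exact hltw
      · rw [Finset.image_union, Finset.image_union, Finset.image_singleton,
          Finset.image_singleton]
        have hV' : V \ {u, w} ∪ {u, w} = V := Finset.sdiff_union_of_subset hsub
        rw [← hV', ← hUn']
        ext x
        simp only [Finset.mem_union, Finset.mem_singleton, Finset.mem_insert]
        tauto
      · have h1 : (V \ {u, w}).card = V.card - 2 := by
          rw [Finset.card_sdiff_of_subset hsub, Finset.card_pair hne]
        have h2 : (θ' ∪ {(u, w)}).card = θ'.card + 1 := by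
          rw [Finset.card_union_of_disjoint (by simpa using hnotin)]
          simp
        have h4 : ({u, w} : Finset α).card ≤ V.card := Finset.card_le_card hsub
        have h5 : ({u, w} : Finset α).card = 2 := Finset.card_pair hne
        omega
      · intro q hq
        rcases Finset.mem_union.mp hq with h | h
        · exact heps' q h
        · rw [Finset.mem_singleton.mp h]
          exact ⟨huneg, hpos w hwV hltw⟩
  · -- part (c)
    intro w hw w' hw' hltw hltw' hnew
    rw [Set.disjoint_left]
    rintro θ ⟨θ₁, h₁, rfl⟩ ⟨θ₂, h₂, heq⟩
    have hmem : (u, w) ∈ θ₂ ∪ {(u, w')} := by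
      rw [← heq]
      exact Finset.mem_union_right _ (Finset.mem_singleton_self _)
    rcases Finset.mem_union.mp hmem with h | h
    · have : u ∈ V \ {u, w'} := by
        rw [← h₂.1.2.1]
        exact Finset.mem_union_left _ (Finset.mem_image_of_mem _ h)
      simp at this
    · exact hnew (congrArg Prod.snd (Finset.mem_singleton.mp h))
end

section
/- Let n ≥ 1 and ε ∈ {-1,1}^{2n+2}_+, let l := max ε^{-1}({-1}), and suppose l ≠ 2n. Then the non-crossing counterpart of ε contains the pair (l, l+1), and, with ε' := the restriction of ε to {1,…,2n+2} \ {l, l+1}, one has ε' ∈ {-1,1}^{V'}_+ for V' := {1,…,2n+2} \ {l, l+1} and 𝒫_{n+1}(ε) = 𝒫_n(ε') ⊎ {(l, l+1)} := {σ ⊎ {(l, l+1)} : σ ∈ 𝒫_n(ε')}. -/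
/-- `V^ε_{0,1}`: the set of endpoints of the pairs of depth `≤ 1` of the non-crossing
pair partition `θnc` (the counterpart of `ε`). -/
def V01 (θnc : Finset (ℕ × ℕ)) : Finset ℕ :=
  (θnc.filter fun p => pairDepth θnc p ≤ 1).image Prod.fst ∪
    (θnc.filter fun p => pairDepth θnc p ≤ 1).image Prod.snd

/-- `𝒫_n(ε)`: gluings of the set of pairs of `θnc` (the non-crossing counterpart of `ε`)
of depth `≥ 2` with an arbitrary element of `PP(V^ε_{0,1}, ε_{0,1})`. -/
def PnSet (ε : ℕ → ℤ) (θnc : Finset (ℕ × ℕ)) : Set (Finset (ℕ × ℕ)) :=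
  {θ | ∃ σ : Finset (ℕ × ℕ), IsPP (V01 θnc) σ ∧
    σ.image Prod.fst = (V01 θnc).filter (fun v => ε v = -1) ∧
    θ = (θnc.filter fun p => 2 ≤ pairDepth θnc p) ∪ σ}

lemma pp_basic {V : Finset ℕ} {θ : Finset (ℕ × ℕ)} (h : IsPP V θ) :
    (∀ p ∈ θ, ∀ q ∈ θ, p.1 = q.1 → p = q) ∧
    (∀ p ∈ θ, ∀ q ∈ θ, p.2 = q.2 → p = q) ∧
    Disjoint (θ.image Prod.fst) (θ.image Prod.snd) := by
  obtain ⟨-, hU, hcard⟩ := h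
  have h1 : (θ.image Prod.fst).card ≤ θ.card := Finset.card_image_le
  have h2 : (θ.image Prod.snd).card ≤ θ.card := Finset.card_image_le
  have h3 : (θ.image Prod.fst ∪ θ.image Prod.snd).card = 2 * θ.card := by
    rw [hU, hcard]
  have h4 : (θ.image Prod.fst ∪ θ.image Prod.snd).card
      ≤ (θ.image Prod.fst).card + (θ.image Prod.snd).card :=
    Finset.card_union_le _ _
  have hf : (θ.image Prod.fst).card = θ.card := by omega
  have hs : (θ.image Prod.snd).card = θ.card := by omega
  have hfi : Set.InjOn Prod.fst (θ : Set (ℕ × ℕ)) := Finset.card_image_iff.mp hf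
  have hsi : Set.InjOn Prod.snd (θ : Set (ℕ × ℕ)) := Finset.card_image_iff.mp hs
  refine ⟨fun p hp q hq hpq => hfi hp hq hpq,
    fun p hp q hq hpq => hsi hp hq hpq, ?_⟩
  exact Finset.card_union_eq_card_add_card.mp (by omega)

lemma pp_mem {V : Finset ℕ} {θ : Finset (ℕ × ℕ)} (h : IsPP V θ) {p : ℕ × ℕ}
    (hp : p ∈ θ) : p.1 ∈ V ∧ p.2 ∈ V := by
  constructor
  · rw [← h.2.1]
    exact Finset.mem_union_left _ (Finset.mem_image_of_mem _ hp)
  · rw [← h.2.1]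
    exact Finset.mem_union_right _ (Finset.mem_image_of_mem _ hp)

/-- In an NC pair partition, the pair whose left point is maximal among left points
pairs it with the next element of `V`. -/
lemma nc_max_pair {V : Finset ℕ} {θ : Finset (ℕ × ℕ)} (hpp : IsPP V θ) (hnc : IsNC θ)
    {a b : ℕ} (hab : (a, b) ∈ θ) (hmax : ∀ x ∈ θ.image Prod.fst, x ≤ a)
    {c : ℕ} (hc : c ∈ V) (hac : a < c) : b ≤ c := by
  by_contra hcb
  push_neg at hcb
  have hcV : c ∈ θ.image Prod.fst ∪ θ.image Prod.snd := by rw [hpp.2.1]; exact hc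
  rcases Finset.mem_union.mp hcV with hcf | hcs
  · exact absurd (hmax c hcf) (by omega)
  · obtain ⟨p, hpθ, hpc⟩ := Finset.mem_image.mp hcs
    have hx : p.1 ≤ a := hmax p.1 (Finset.mem_image_of_mem _ hpθ)
    have hxa : p.1 ≠ a := by
      intro hxa
      have := (pp_basic hpp).1 p hpθ (a, b) hab (by simpa using hxa)
      rw [this] at hpc
      simp at hpc
      omega
    have hiff := hnc p hpθ (a, b) hab (by omega)
    rw [hpc] at hiff
    have := hiff.mp ⟨by omega, by omega⟩
    omega

lemma pp_erase {V : Finset ℕ} {θ : Finset (ℕ × ℕ)} (h : IsPP V θ) {a b : ℕ}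
    (hab : (a, b) ∈ θ) :
    IsPP (V \ {a, b}) (θ.erase (a, b)) ∧
    (θ.erase (a, b)).image Prod.fst = (θ.image Prod.fst).erase a ∧
    (θ.erase (a, b)).image Prod.snd = (θ.image Prod.snd).erase b := by
  obtain ⟨hfi, hsi, hdisj⟩ := pp_basic h
  have hlt : a < b := h.1 _ hab
  have haV : a ∈ V := (pp_mem h hab).1
  have hbV : b ∈ V := (pp_mem h hab).2
  have hfim : (θ.erase (a, b)).image Prod.fst = (θ.image Prod.fst).erase a := by
    ext x
    simp only [Finset.mem_image, Finset.mem_erase]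
    constructor
    · rintro ⟨p, ⟨hpne, hpθ⟩, rfl⟩
      refine ⟨fun hxa => hpne (hfi p hpθ (a, b) hab (by simpa using hxa)), p, hpθ, rfl⟩
    · rintro ⟨hxa, p, hpθ, rfl⟩
      exact ⟨p, ⟨fun he => hxa (by rw [he]), hpθ⟩, rfl⟩
  have hsim : (θ.erase (a, b)).image Prod.snd = (θ.image Prod.snd).erase b := by
    ext x
    simp only [Finset.mem_image, Finset.mem_erase]
    constructor
    · rintro ⟨p, ⟨hpne, hpθ⟩, rfl⟩
      refine ⟨fun hxb => hpne (hsi p hpθ (a, b) hab (by simpa using hxb)), p, hpθ, rfl⟩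
    · rintro ⟨hxb, p, hpθ, rfl⟩
      exact ⟨p, ⟨fun he => hxb (by rw [he]), hpθ⟩, rfl⟩
  have hamem : a ∈ θ.image Prod.fst := Finset.mem_image_of_mem _ hab
  have hbmem : b ∈ θ.image Prod.snd := Finset.mem_image_of_mem _ hab
  have hanotsnd : a ∉ θ.image Prod.snd := Finset.disjoint_left.mp hdisj hamem
  have hbnotfst : b ∉ θ.image Prod.fst := Finset.disjoint_right.mp hdisj hbmem
  refine ⟨⟨fun p hp => h.1 p (Finset.mem_of_mem_erase hp), ?_, ?_⟩, hfim, hsim⟩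
  · rw [hfim, hsim, ← h.2.1]
    ext x
    simp only [Finset.mem_union, Finset.mem_erase, Finset.mem_sdiff,
      Finset.mem_insert, Finset.mem_singleton]
    constructor
    · rintro (⟨hxa, hx⟩ | ⟨hxb, hx⟩)
      · exact ⟨Or.inl hx, fun hc => hc.elim hxa (fun hxb => hbnotfst (hxb ▸ hx))⟩
      · exact ⟨Or.inr hx, fun hc => hc.elim (fun hxa => hanotsnd (hxa ▸ hx)) hxb⟩
    · rintro ⟨hx | hx, hne⟩
      · exact Or.inl ⟨fun hc => hne (Or.inl hc), hx⟩
      · exact Or.inr ⟨fun hc => hne (Or.inr hc), hx⟩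
  · have hsub : ({a, b} : Finset ℕ) ⊆ V := by
      intro x hx
      rcases Finset.mem_insert.mp hx with rfl | hx
      · exact haV
      · rw [Finset.mem_singleton.mp hx]; exact hbV
    rw [Finset.card_sdiff_of_subset hsub, Finset.card_erase_of_mem hab,
      Finset.card_pair (by omega : a ≠ b), h.2.2]
    have : 1 ≤ θ.card := Finset.card_pos.mpr ⟨_, hab⟩
    omega

lemma nc_erase {θ : Finset (ℕ × ℕ)} (hnc : IsNC θ) (q : ℕ × ℕ) : IsNC (θ.erase q) :=
  fun p hp r hr hpr => hnc p (Finset.mem_of_mem_erase hp) r (Finset.mem_of_mem_erase hr) hpr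

/-- Uniqueness of the non-crossing pair partition with prescribed left points. -/
lemma nc_unique (N : ℕ) : ∀ (V : Finset ℕ) (θ θ' : Finset (ℕ × ℕ)),
    V.card ≤ N → IsPP V θ → IsNC θ → IsPP V θ' → IsNC θ' →
    θ.image Prod.fst = θ'.image Prod.fst → θ = θ' := by
  induction N with
  | zero =>
    intro V θ θ' hN hpp hnc hpp' hnc' heq
    have h1 : θ.card = 0 := by have := hpp.2.2; omega
    have h2 : θ'.card = 0 := by have := hpp'.2.2; omega
    rw [Finset.card_eq_zero.mp h1, Finset.card_eq_zero.mp h2]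
  | succ N ih =>
    intro V θ θ' hN hpp hnc hpp' hnc' heq
    rcases Finset.eq_empty_or_nonempty θ with rfl | hne
    · have h1 := hpp.2.2
      simp only [Finset.card_empty, Nat.mul_zero] at h1
      have h2 : θ'.card = 0 := by have := hpp'.2.2; omega
      rw [Finset.card_eq_zero.mp h2]
    · have hLne : (θ.image Prod.fst).Nonempty := hne.image _
      set a := (θ.image Prod.fst).max' hLne with ha
      have hamem : a ∈ θ.image Prod.fst := Finset.max'_mem _ _
      have hmax : ∀ x ∈ θ.image Prod.fst, x ≤ a := fun x hx => Finset.le_max' _ x hx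
      have hmax' : ∀ x ∈ θ'.image Prod.fst, x ≤ a := by rw [← heq]; exact hmax
      obtain ⟨p, hpθ, hp1⟩ := Finset.mem_image.mp hamem
      obtain ⟨p', hp'θ, hp'1⟩ := Finset.mem_image.mp (heq ▸ hamem)
      have hpab : (a, p.2) ∈ θ := by rwa [← hp1, Prod.mk.eta]
      have hp'ab : (a, p'.2) ∈ θ' := by rwa [← hp'1, Prod.mk.eta]
      have h1 : p.2 ≤ p'.2 :=
        nc_max_pair hpp hnc hpab hmax (pp_mem hpp' hp'ab).2 (hpp'.1 _ hp'ab)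
      have h2 : p'.2 ≤ p.2 :=
        nc_max_pair hpp' hnc' hp'ab hmax' (pp_mem hpp hpab).2 (hpp.1 _ hpab)
      have hbb : p'.2 = p.2 := le_antisymm h2 h1
      rw [hbb] at hp'ab
      set b := p.2
      obtain ⟨hpp2, hf2, -⟩ := pp_erase hpp hpab
      obtain ⟨hpp2', hf2', -⟩ := pp_erase hpp' hp'ab
      have hcard : (V \ {a, b}).card ≤ N := by
        have h4 : ({a, b} : Finset ℕ) ⊆ V := by
          intro x hx
          rcases Finset.mem_insert.mp hx with rfl | hx
          · exact (pp_mem hpp hpab).1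
          · rw [Finset.mem_singleton.mp hx]; exact (pp_mem hpp hpab).2
        have h5 := Finset.card_sdiff_of_subset h4
        have h6 : ({a, b} : Finset ℕ).card = 2 :=
          Finset.card_pair (by have := hpp.1 _ hpab; omega)
        have h7 : 1 ≤ θ.card := Finset.card_pos.mpr ⟨_, hpθ⟩
        have h8 := hpp.2.2
        omega
      have hkey := ih (V \ {a, b}) (θ.erase (a, b)) (θ'.erase (a, b)) hcard
        hpp2 (nc_erase hnc _) hpp2' (nc_erase hnc' _)
        (by rw [hf2, hf2', heq])
      rw [← Finset.insert_erase hpab, ← Finset.insert_erase hp'ab, hkey]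

lemma V01_subset {V : Finset ℕ} {θ : Finset (ℕ × ℕ)} (h : IsPP V θ) : V01 θ ⊆ V := by
  intro x hx
  rw [← h.2.1]
  rcases Finset.mem_union.mp hx with hx | hx
  · obtain ⟨p, hp, rfl⟩ := Finset.mem_image.mp hx
    exact Finset.mem_union_left _
      (Finset.mem_image_of_mem _ (Finset.mem_of_mem_filter p hp))
  · obtain ⟨p, hp, rfl⟩ := Finset.mem_image.mp hx
    exact Finset.mem_union_right _
      (Finset.mem_image_of_mem _ (Finset.mem_of_mem_filter p hp))

lemma union_sing {α : Type*} [DecidableEq α] (s : Finset α) (a : α) :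
    s ∪ {a} = insert a s := by
  ext x
  simp [or_comm]
/-- Let `n ≥ 1`, `ε ∈ {-1,1}^{2n+2}_+`, `l := max ε⁻¹({-1})` and suppose `l ≠ 2n`.
If `θnc` is the non-crossing counterpart of `ε` and `θnc'` that of the restriction `ε'`
of `ε` to `{1,…,2n+2} \ {l, l+1}`, then `(l, l+1) ∈ θnc`, `ε'` is again in
`{-1,1}^{V'}_+` on `V' := {1,…,2n+2} \ {l, l+1}`, and
`𝒫_{n+1}(ε) = {σ ⊎ {(l, l+1)} : σ ∈ 𝒫_n(ε')}`. -/
theorem stmt18 (n : ℕ) (hn : 1 ≤ n) (ε : ℕ → ℤ)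
    (hval : ∀ v ∈ Finset.Icc 1 (2 * n + 2), ε v = 1 ∨ ε v = -1)
    (hsum : ∑ v ∈ Finset.Icc 1 (2 * n + 2), ε v = 0)
    (htail : ∀ p ∈ Finset.Icc 1 (2 * n + 2),
      0 ≤ ∑ h ∈ Finset.Icc p (2 * n + 2), ε h)
    (l : ℕ) (hl : l ∈ Finset.Icc 1 (2 * n + 2)) (hlneg : ε l = -1)
    (hlmax : ∀ v ∈ Finset.Icc 1 (2 * n + 2), ε v = -1 → v ≤ l)
    (hlne : l ≠ 2 * n)
    (θnc : Finset (ℕ × ℕ))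
    (hpp : IsPP (Finset.Icc 1 (2 * n + 2)) θnc)
    (hleft : θnc.image Prod.fst =
      (Finset.Icc 1 (2 * n + 2)).filter fun v => ε v = -1)
    (hnc : IsNC θnc)
    (θnc' : Finset (ℕ × ℕ))
    (hpp' : IsPP (Finset.Icc 1 (2 * n + 2) \ {l, l + 1}) θnc')
    (hleft' : θnc'.image Prod.fst =
      (Finset.Icc 1 (2 * n + 2) \ {l, l + 1}).filter fun v => ε v = -1)
    (hnc' : IsNC θnc') :
    (l, l + 1) ∈ θnc ∧
      (∑ v ∈ Finset.Icc 1 (2 * n + 2) \ {l, l + 1}, ε v = 0 ∧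
        ∀ u ∈ Finset.Icc 1 (2 * n + 2) \ {l, l + 1},
          0 ≤ ∑ v ∈ (Finset.Icc 1 (2 * n + 2) \ {l, l + 1}).filter
            (fun v => u ≤ v), ε v) ∧
      PnSet ε θnc = {θ | ∃ σ ∈ PnSet ε θnc', θ = σ ∪ {(l, l + 1)}} := by
  have hlb : 1 ≤ l ∧ l ≤ 2 * n + 2 := by simpa [Finset.mem_Icc] using hl
  have hltop : l ≠ 2 * n + 2 := by
    intro h
    have h1 := htail (2 * n + 2) (by simp [Finset.mem_Icc])
    rw [Finset.Icc_self, Finset.sum_singleton] at h1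
    rw [h] at hlneg
    omega
  have hl1mem : l + 1 ∈ Finset.Icc 1 (2 * n + 2) := by
    simp only [Finset.mem_Icc]
    omega
  have hε1 : ε (l + 1) = 1 := by
    rcases hval (l + 1) hl1mem with h | h
    · exact h
    · have := hlmax (l + 1) hl1mem h
      omega
  -- Part 1 : (l, l+1) ∈ θnc
  have hlleft : l ∈ θnc.image Prod.fst := by
    rw [hleft]
    exact Finset.mem_filter.mpr ⟨hl, hlneg⟩
  obtain ⟨p, hpθ, hp1⟩ := Finset.mem_image.mp hlleft
  have hpl : (l, p.2) ∈ θnc := by rwa [← hp1, Prod.mk.eta]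
  have hmaxf : ∀ x ∈ θnc.image Prod.fst, x ≤ l := by
    rw [hleft]
    intro x hx
    obtain ⟨hxS, hxneg⟩ := Finset.mem_filter.mp hx
    exact hlmax x hxS hxneg
  have hble : p.2 ≤ l + 1 := nc_max_pair hpp hnc hpl hmaxf hl1mem (by omega)
  have hblt : l < p.2 := hpp.1 _ hpl
  have hq : (l, l + 1) ∈ θnc := by
    have h : p.2 = l + 1 := by omega
    rwa [h] at hpl
  -- Part 2 : sums
  have hsub : ({l, l + 1} : Finset ℕ) ⊆ Finset.Icc 1 (2 * n + 2) := by
    intro x hx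
    rcases Finset.mem_insert.mp hx with rfl | hx
    · exact hl
    · rw [Finset.mem_singleton.mp hx]; exact hl1mem
  have hpairsum : ∑ v ∈ ({l, l + 1} : Finset ℕ), ε v = 0 := by
    rw [Finset.sum_pair (by omega : l ≠ l + 1), hlneg, hε1]
    ring
  have hsum' : ∑ v ∈ Finset.Icc 1 (2 * n + 2) \ {l, l + 1}, ε v = 0 := by
    rw [Finset.sum_sdiff_eq_sub hsub, hsum, hpairsum]
    ring
  have htail' : ∀ u ∈ Finset.Icc 1 (2 * n + 2) \ {l, l + 1},
      0 ≤ ∑ v ∈ (Finset.Icc 1 (2 * n + 2) \ {l, l + 1}).filter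
        (fun v => u ≤ v), ε v := by
    intro u hu
    obtain ⟨huS, hun⟩ := Finset.mem_sdiff.mp hu
    simp only [Finset.mem_insert, Finset.mem_singleton, not_or] at hun
    have hub : 1 ≤ u ∧ u ≤ 2 * n + 2 := by simpa [Finset.mem_Icc] using huS
    by_cases hul : u < l
    · have hsub2 : ({l, l + 1} : Finset ℕ) ⊆ Finset.Icc u (2 * n + 2) := by
        intro x hx
        rcases Finset.mem_insert.mp hx with rfl | hx
        · simp only [Finset.mem_Icc]; omega
        · rw [Finset.mem_singleton.mp hx]; simp only [Finset.mem_Icc]; omega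
      have hfe : (Finset.Icc 1 (2 * n + 2) \ {l, l + 1}).filter (fun v => u ≤ v)
          = Finset.Icc u (2 * n + 2) \ {l, l + 1} := by
        ext v
        simp only [Finset.mem_filter, Finset.mem_sdiff, Finset.mem_Icc,
          Finset.mem_insert, Finset.mem_singleton, not_or]
        omega
      rw [hfe, Finset.sum_sdiff_eq_sub hsub2, hpairsum]
      have := htail u huS
      omega
    · have hfe : (Finset.Icc 1 (2 * n + 2) \ {l, l + 1}).filter (fun v => u ≤ v)
          = Finset.Icc u (2 * n + 2) := by
        ext v
        simp only [Finset.mem_filter, Finset.mem_sdiff, Finset.mem_Icc,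
          Finset.mem_insert, Finset.mem_singleton, not_or]
        omega
      rw [hfe]
      exact htail u huS
  refine ⟨hq, ⟨hsum', htail'⟩, ?_⟩
  -- Part 3 : the set equality
  -- identify θnc' with θnc.erase (l, l+1)
  obtain ⟨hppE, hfE, hsE⟩ := pp_erase hpp hq
  have hleftE : (θnc.erase (l, l + 1)).image Prod.fst = θnc'.image Prod.fst := by
    rw [hfE, hleft, hleft']
    ext v
    simp only [Finset.mem_erase, Finset.mem_filter, Finset.mem_sdiff,
      Finset.mem_insert, Finset.mem_singleton, not_or]
    constructor
    · rintro ⟨hvl, hvS, hvneg⟩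
      refine ⟨⟨hvS, hvl, ?_⟩, hvneg⟩
      intro h
      rw [h, hε1] at hvneg
      omega
    · rintro ⟨⟨hvS, hvn1, hvn2⟩, hvneg⟩
      exact ⟨hvn1, hvS, hvneg⟩
  have hE : θnc' = θnc.erase (l, l + 1) :=
    (nc_unique (Finset.Icc 1 (2 * n + 2) \ {l, l + 1}).card _ _ _ le_rfl
      hppE (nc_erase hnc _) hpp' hnc' hleftE).symm
  have hqnot : (l, l + 1) ∉ θnc' := by
    rw [hE]; exact Finset.notMem_erase _ _
  have hmemiff : ∀ r, r ∈ θnc ↔ r = (l, l + 1) ∨ r ∈ θnc' := by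
    intro r
    constructor
    · intro h
      rcases eq_or_ne r (l, l + 1) with rfl | hne
      · exact Or.inl rfl
      · right
        rw [hE]
        exact Finset.mem_erase.mpr ⟨hne, h⟩
    · rintro (rfl | h)
      · exact hq
      · rw [hE] at h
        exact Finset.mem_of_mem_erase h
  have hdepth : ∀ p, pairDepth θnc' p = pairDepth θnc p := by
    intro r
    unfold pairDepth
    rw [hE, Finset.filter_erase, Finset.erase_eq_of_notMem]
    intro hmem
    obtain ⟨-, h1, h2, h3⟩ := Finset.mem_filter.mp hmem
    have h1' : l < r.1 := h1
    have h3' : r.2 < l + 1 := h3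
    omega
  have hV01sub' : V01 θnc' ⊆ Finset.Icc 1 (2 * n + 2) \ {l, l + 1} :=
    V01_subset hpp'
  have hlnot : l ∉ V01 θnc' := by
    intro h
    have := hV01sub' h
    simp [Finset.mem_sdiff] at this
  have hl1not : l + 1 ∉ V01 θnc' := by
    intro h
    have := hV01sub' h
    simp [Finset.mem_sdiff] at this
  rcases Nat.lt_or_ge l (2 * n) with hcase | hcase
  · -- Case l ≤ 2n - 1 : the pair (l, l+1) is deep
    have hmem2 : ∀ m, l < m → m ≠ l + 1 → m ∈ Finset.Icc 1 (2 * n + 2) →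
        ∃ r ∈ θnc, r.2 = m ∧ r.1 < l := by
      intro m hm hm1 hmS
      have hmU : m ∈ θnc.image Prod.fst ∪ θnc.image Prod.snd := by
        rw [hpp.2.1]; exact hmS
      rcases Finset.mem_union.mp hmU with h | h
      · exact absurd (hmaxf m h) (by omega)
      · obtain ⟨r, hr, rfl⟩ := Finset.mem_image.mp h
        refine ⟨r, hr, rfl, ?_⟩
        have h1 : r.1 ≤ l := hmaxf r.1 (Finset.mem_image_of_mem _ hr)
        have h2 : r.1 ≠ l := by
          intro he
          have := (pp_basic hpp).1 r hr (l, l + 1) hq (by rw [he])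
          rw [this] at hm1
          simp at hm1
        omega
    obtain ⟨r1, hr1θ, hr1e, hr1lt⟩ := hmem2 (2 * n + 1) (by omega) (by omega)
      (by simp only [Finset.mem_Icc]; omega)
    obtain ⟨r2, hr2θ, hr2e, hr2lt⟩ := hmem2 (2 * n + 2) (by omega) (by omega)
      (by simp only [Finset.mem_Icc]; omega)
    have hd2 : 2 ≤ pairDepth θnc (l, l + 1) := by
      unfold pairDepth
      have h1 : r1 ∈ θnc.filter fun r => r.1 < l ∧ l < l + 1 ∧ l + 1 < r.2 := by
        refine Finset.mem_filter.mpr ⟨hr1θ, hr1lt, by omega, by omega⟩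
      have h2 : r2 ∈ θnc.filter fun r => r.1 < l ∧ l < l + 1 ∧ l + 1 < r.2 := by
        refine Finset.mem_filter.mpr ⟨hr2θ, hr2lt, by omega, by omega⟩
      have hne12 : r1 ≠ r2 := by
        intro h
        rw [h, hr2e] at hr1e
        omega
      exact Finset.one_lt_card.mpr ⟨r1, h1, r2, h2, hne12⟩
    have hdeep : θnc.filter (fun r => 2 ≤ pairDepth θnc r)
        = insert (l, l + 1) (θnc'.filter (fun r => 2 ≤ pairDepth θnc' r)) := by
      ext r
      simp only [Finset.mem_filter, hmemiff r, Finset.mem_insert, hdepth]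
      constructor
      · rintro ⟨rfl | hr, h2⟩
        · exact Or.inl rfl
        · exact Or.inr ⟨hr, h2⟩
      · rintro (rfl | ⟨hr, h2⟩)
        · exact ⟨Or.inl rfl, hd2⟩
        · exact ⟨Or.inr hr, h2⟩
    have hshal : θnc.filter (fun r => pairDepth θnc r ≤ 1)
        = θnc'.filter (fun r => pairDepth θnc' r ≤ 1) := by
      ext r
      simp only [Finset.mem_filter, hmemiff r, hdepth]
      constructor
      · rintro ⟨rfl | hr, h2⟩
        · omega
        · exact ⟨hr, h2⟩
      · rintro ⟨hr, h2⟩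
        exact ⟨Or.inr hr, h2⟩
    have hV01 : V01 θnc = V01 θnc' := by
      unfold V01
      rw [hshal]
    ext θ
    simp only [PnSet, Set.mem_setOf_eq]
    constructor
    · rintro ⟨σ, h1, h2, rfl⟩
      refine ⟨(θnc'.filter fun r => 2 ≤ pairDepth θnc' r) ∪ σ,
        ⟨σ, by rwa [← hV01], by rwa [← hV01], rfl⟩, ?_⟩
      rw [hdeep, union_sing, Finset.insert_union]
    · rintro ⟨σout, ⟨σ, h1, h2, rfl⟩, rfl⟩
      refine ⟨σ, by rwa [hV01], by rwa [hV01], ?_⟩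
      rw [hdeep, union_sing, Finset.insert_union]
  · -- Case l = 2n + 1 : the pair (l, l+1) is shallow
    have hleq : l = 2 * n + 1 := by omega
    have hd0 : pairDepth θnc (l, l + 1) = 0 := by
      unfold pairDepth
      rw [Finset.card_eq_zero, Finset.filter_eq_empty_iff]
      intro r hr
      have h2 := (pp_mem hpp hr).2
      simp only [Finset.mem_Icc] at h2
      intro hcon
      obtain ⟨c1, c2, c3⟩ := hcon
      have c3' : (l:ℕ) + 1 < r.2 := c3
      omega
    have hdeep : θnc.filter (fun r => 2 ≤ pairDepth θnc r)
        = θnc'.filter (fun r => 2 ≤ pairDepth θnc' r) := by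
      ext r
      simp only [Finset.mem_filter, hmemiff r, hdepth]
      constructor
      · rintro ⟨rfl | hr, h2⟩
        · rw [hd0] at h2; omega
        · exact ⟨hr, h2⟩
      · rintro ⟨hr, h2⟩
        exact ⟨Or.inr hr, h2⟩
    have hshal : θnc.filter (fun r => pairDepth θnc r ≤ 1)
        = insert (l, l + 1) (θnc'.filter (fun r => pairDepth θnc' r ≤ 1)) := by
      ext r
      simp only [Finset.mem_filter, hmemiff r, Finset.mem_insert, hdepth]
      constructor
      · rintro ⟨rfl | hr, h2⟩
        · exact Or.inl rfl
        · exact Or.inr ⟨hr, h2⟩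
      · rintro (rfl | ⟨hr, h2⟩)
        · exact ⟨Or.inl rfl, by rw [hd0]; exact Nat.zero_le 1⟩
        · exact ⟨Or.inr hr, h2⟩
    have hV01 : V01 θnc = insert l (insert (l + 1) (V01 θnc')) := by
      unfold V01
      rw [hshal, Finset.image_insert, Finset.image_insert,
        Finset.insert_union, Finset.union_insert]
    have hV01card : (V01 θnc).card = (V01 θnc').card + 2 := by
      rw [hV01, Finset.card_insert_of_notMem, Finset.card_insert_of_notMem hl1not]
      simp only [Finset.mem_insert]
      push_neg
      exact ⟨by omega, hlnot⟩
    have hfilt : (V01 θnc).filter (fun v => ε v = -1)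
        = insert l ((V01 θnc').filter (fun v => ε v = -1)) := by
      rw [hV01, Finset.filter_insert, Finset.filter_insert, if_pos hlneg,
        if_neg (by rw [hε1]; norm_num)]
    have hlnotf : l ∉ (V01 θnc').filter (fun v => ε v = -1) :=
      fun h => hlnot (Finset.mem_of_mem_filter l h)
    ext θ
    simp only [PnSet, Set.mem_setOf_eq]
    constructor
    · rintro ⟨σ, h1, h2, rfl⟩
      -- σ must contain (l, l+1)
      have hlσ : l ∈ σ.image Prod.fst := by
        rw [h2, hfilt]
        exact Finset.mem_insert_self _ _
      obtain ⟨s, hsσ, hs1⟩ := Finset.mem_image.mp hlσ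
      have hsl : (l, s.2) ∈ σ := by rwa [← hs1, Prod.mk.eta]
      have hs2a : l < s.2 := h1.1 _ hsl
      have hs2b : s.2 ∈ V01 θnc := (pp_mem h1 hsl).2
      have hs2c : s.2 ≤ 2 * n + 2 := by
        have := V01_subset hpp hs2b
        simp only [Finset.mem_Icc] at this
        omega
      have hqσ : (l, l + 1) ∈ σ := by
        have : s.2 = l + 1 := by omega
        rwa [this] at hsl
      obtain ⟨hppσE, hfσE, -⟩ := pp_erase h1 hqσ
      have hVd : V01 θnc \ {l, l + 1} = V01 θnc' := by
        rw [hV01]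
        ext v
        simp only [Finset.mem_sdiff, Finset.mem_insert, Finset.mem_singleton, not_or]
        constructor
        · rintro ⟨rfl | rfl | hv, hn1, hn2⟩
          · exact absurd rfl hn1
          · exact absurd rfl hn2
          · exact hv
        · intro hv
          refine ⟨Or.inr (Or.inr hv), ?_, ?_⟩
          · rintro rfl; exact hlnot hv
          · rintro rfl; exact hl1not hv
      rw [hVd] at hppσE
      have hfσ : (σ.erase (l, l + 1)).image Prod.fst
          = (V01 θnc').filter (fun v => ε v = -1) := by
        rw [hfσE, h2, hfilt, Finset.erase_insert hlnotf]
      refine ⟨(θnc'.filter fun r => 2 ≤ pairDepth θnc' r) ∪ σ.erase (l, l + 1),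
        ⟨σ.erase (l, l + 1), hppσE, hfσ, rfl⟩, ?_⟩
      rw [hdeep, union_sing, ← Finset.union_insert, Finset.insert_erase hqσ]
    · rintro ⟨σout, ⟨σ, h1, h2, rfl⟩, rfl⟩
      have hqσ : (l, l + 1) ∉ σ := by
        intro h
        have := (pp_mem h1 h).1
        exact hlnot this
      refine ⟨insert (l, l + 1) σ, ⟨?_, ?_, ?_⟩, ?_, ?_⟩
      · intro r hr
        rcases Finset.mem_insert.mp hr with rfl | hr
        · exact Nat.lt_succ_self l
        · exact h1.1 r hr
      · rw [Finset.image_insert, Finset.image_insert, Finset.insert_union,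
          Finset.union_insert, h1.2.1, hV01]
      · rw [Finset.card_insert_of_notMem hqσ, hV01card, h1.2.2]
        ring
      · rw [Finset.image_insert, h2, hfilt]
      · rw [hdeep, union_sing, ← Finset.union_insert]
end
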